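/- arXiv:1409.8064 — 4 statements merged into one kernel-verified Lean document; each statement's English description precedes it below -/
import Mathlib

section
/- Let G be an infinite group and A a subset of G. If A is not small, then A is Δ-large. -/
/-! A non-small `A` comes with a finite `E` and a set `L` with `E L = G` such that `(G \ A) ∩ L`
is not large. This forces `E A` to be thick: for every finite `K` some `x` has `K x ⊆ E A`, and in
an infinite group infinitely many `x` do. Given `g`, take `K = {1} ∪ g E⁻¹`; pigeonholing the
witnesses over `E` twice yields `f, e ∈ E` and infinitely many `a ∈ A` with `f a` a witness and
`g a = (g f⁻¹)(f a) ∈ e A`, so `e⁻¹ g ∈ Δ(A)`. Hence `E Δ(A) = G`. -/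

open Pointwise

/-- The combinatorial derivation `Δ(A) = {g ∈ G : gA ∩ A is infinite}`. -/
def combDeriv {G : Type*} [Group G] (A : Set G) : Set G :=
  {g : G | ((g • A) ∩ A).Infinite}

/-- `A ⊆ G` is large if `FA = G` for some finite `F ⊆ G`. -/
def IsLarge {G : Type*} [Group G] (A : Set G) : Prop :=
  ∃ F : Set G, F.Finite ∧ F * A = Set.univ

/-- `A ⊆ G` is small if `(G \ A) ∩ L` is large for every large `L ⊆ G`. -/
def IsSmall {G : Type*} [Group G] (A : Set G) : Prop :=
  ∀ L : Set G, IsLarge L → IsLarge ((Set.univ \ A) ∩ L)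

section

variable {G : Type*} [Group G]

def IsThick (T : Set G) : Prop :=
  ∀ K : Set G, K.Finite → ∃ x, ∀ k ∈ K, k * x ∈ T

theorem isThick_mul_of_not_isLarge {E L A : Set G} (hE : E.Finite) (hEL : E * L = Set.univ)
    (hB : ¬ IsLarge ((Set.univ \ A) ∩ L)) : IsThick (E * A) := by
  intro K hK
  by_contra! h
  refine hB ⟨K⁻¹ * E, hK.inv.mul hE, Set.eq_univ_of_forall fun g => ?_⟩
  obtain ⟨k, hk, hkg⟩ := h g
  obtain ⟨e, he, l, hl, hel⟩ : k * g ∈ E * L := hEL ▸ Set.mem_univ _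
  have hlA : l ∉ A := fun hlA => hkg ⟨e, he, l, hlA, hel⟩
  refine ⟨k⁻¹ * e, Set.mul_mem_mul (Set.inv_mem_inv.mpr hk) he, l, ⟨⟨trivial, hlA⟩, hl⟩, ?_⟩
  change k⁻¹ * e * l = g
  rw [mul_assoc, show e * l = k * g from hel, inv_mul_cancel_left]

theorem IsThick.infinite_setOf [Infinite G] {T K : Set G} (hT : IsThick T) (hK : K.Finite) :
    {x | ∀ k ∈ K, k * x ∈ T}.Infinite := by
  intro hS
  apply Set.infinite_univ (α := G)
  -- Thickness on `K * {1, d}` puts both `x` and `d * x` in the finite witness set `S`, so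
  -- `d ∈ S * S⁻¹` for every `d`.
  refine (hS.mul hS.inv).subset fun d _ => ?_
  obtain ⟨x, hx⟩ := hT (K * {1, d}) (hK.mul (Set.toFinite _))
  refine ⟨d * x, fun k hk => ?_, x⁻¹, Set.inv_mem_inv.mpr fun k hk => ?_, by group⟩
  · simpa only [mul_assoc] using hx (k * d) (Set.mul_mem_mul hk (by simp))
  · simpa only [mul_one] using hx (k * 1) (Set.mul_mem_mul hk (by simp))

theorem exists_infinite_inter_smul_of_subset_mul {E A S : Set G} (hE : E.Finite)
    (hS : S.Infinite) (hSEA : S ⊆ E * A) : ∃ e ∈ E, (S ∩ e • A).Infinite := by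
  by_contra! h
  refine hS ((hE.biUnion h).subset fun x hx => ?_)
  obtain ⟨e, he, a, ha, hea⟩ := hSEA hx
  exact Set.mem_biUnion he ⟨hx, a, ha, hea⟩

theorem IsThick.isLarge_combDeriv [Infinite G] {E A : Set G} (hE : E.Finite)
    (hT : IsThick (E * A)) : IsLarge (combDeriv A) := by
  refine ⟨E, hE, Set.eq_univ_of_forall fun g => ?_⟩
  set K : Set G := insert 1 ((g * ·) '' E⁻¹)
  set S := {x | ∀ k ∈ K, k * x ∈ E * A}
  have hSEA : S ⊆ E * A := fun x hx => by simpa using hx 1 (Set.mem_insert 1 _)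
  obtain ⟨f, hf, hSf⟩ := exists_infinite_inter_smul_of_subset_mul hE
    (hT.infinite_setOf ((hE.inv.image _).insert 1)) hSEA
  have hgSf : (g * f⁻¹) • (S ∩ f • A) ⊆ E * A := by
    rintro _ ⟨x, ⟨hxS, -⟩, rfl⟩
    exact hxS _ (Set.mem_insert_of_mem _ ⟨f⁻¹, Set.inv_mem_inv.mpr hf, rfl⟩)
  obtain ⟨e, he, hSe⟩ := exists_infinite_inter_smul_of_subset_mul hE hSf.smul_set hgSf
  refine ⟨e, he, e⁻¹ * g, ?_, by group⟩
  refine (hSe.smul_set (a := e⁻¹)).mono ?_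
  rw [Set.smul_set_inter, inv_smul_smul, smul_smul]
  refine Set.inter_subset_inter_left _ (Set.smul_set_mono Set.inter_subset_right |>.trans ?_)
  rw [smul_smul, mul_assoc, inv_mul_cancel_right]

end

/-- If `A` is not small, then `A` is Δ-large. -/
theorem not_small_implies_delta_large {G : Type*} [Group G] [Infinite G]
    (A : Set G) (hA : ¬ IsSmall A) : IsLarge (combDeriv A) := by
  simp only [IsSmall, not_forall] at hA
  obtain ⟨L, ⟨E, hE, hEL⟩, hB⟩ := hA
  exact (isThick_mul_of_not_isLarge hE hEL hB).isLarge_combDeriv hE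
end

section
/- Let G be an infinite group, I a proper translation invariant ideal on G, and A a subset of G. If A is not I-small, then A is Δ_I-large. -/
open Pointwise

/-- A family of subsets of `G` is an ideal if it is closed under taking subsets
and finite unions. -/
def IsSetIdeal {G : Type*} (I : Set (Set G)) : Prop :=
  (∀ s t : Set G, s ⊆ t → t ∈ I → s ∈ I) ∧ (∀ s ∈ I, ∀ t ∈ I, s ∪ t ∈ I)

/-- A family of subsets of `G` is translation invariant if it is closed under
left translation. -/
def IsTransInv {G : Type*} [Group G] (I : Set (Set G)) : Prop :=
  ∀ s ∈ I, ∀ g : G, g • s ∈ I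

/-- `A =_I B` iff the symmetric difference `A △ B` belongs to `I`. -/
def IdealEq {G : Type*} (I : Set (Set G)) (A B : Set G) : Prop :=
  symmDiff A B ∈ I

/-- `A` is `I`-large if `FA =_I G` for some finite `F ⊆ G`. -/
def ILarge {G : Type*} [Group G] (I : Set (Set G)) (A : Set G) : Prop :=
  ∃ F : Set G, F.Finite ∧ IdealEq I (F * A) Set.univ

/-- `A` is `I`-small if `(G \ A) ∩ L` is `I`-large for every `I`-large `L ⊆ G`. -/
def ISmall {G : Type*} [Group G] (I : Set (Set G)) (A : Set G) : Prop :=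
  ∀ L : Set G, ILarge I L → ILarge I ((Set.univ \ A) ∩ L)

/-- The combinatorial derivation relative to `I`:
`Δ_I(A) = {g ∈ G : gA ∩ A ∉ I}`. -/
def combDerivI {G : Type*} [Group G] (I : Set (Set G)) (A : Set G) : Set G :=
  {g : G | (g • A) ∩ A ∉ I}

/-!
If `A` is not `I`-small, there are a finite `F` and an `I`-large `L` with `F L =_I G` such that
`(G \ A) ∩ L` is not `I`-large. Then no finite intersection `⋂_{h ∈ H} h F (L ∩ A)` lies in `I`:
otherwise `H F ((G \ A) ∩ L)` would cover `G` modulo `I`. Given `g`, apply this to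
`H = {1} ∪ F g` and pigeonhole twice over `F`: some `f ∈ F` has
`(g f)(L ∩ A) ∩ (L ∩ A) ∉ I`, so `g f ∈ Δ_I(A)`. As `Δ_I(A)` is closed under inverses,
`F Δ_I(A) = G`.
-/

theorem idealEq_univ_iff {G : Type*} {I : Set (Set G)} {S : Set G} :
    IdealEq I S Set.univ ↔ Set.univ \ S ∈ I := by
  rw [IdealEq, symmDiff_of_le (Set.subset_univ S)]

namespace IsSetIdeal

variable {G : Type*} {I : Set (Set G)}

theorem biUnion_mem (hI : IsSetIdeal I) (h0 : ∅ ∈ I) {α : Type*} {S : Set α} (hS : S.Finite)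
    {f : α → Set G} (hf : ∀ a ∈ S, f a ∈ I) : (⋃ a ∈ S, f a) ∈ I := by
  induction S, hS using Set.Finite.induction_on with
  | empty => simpa using h0
  | @insert a S _ _ ih =>
    rw [Set.biUnion_insert]
    exact hI.2 _ (hf a (Set.mem_insert _ _)) _ (ih fun b hb => hf b (Set.mem_insert_of_mem _ hb))

theorem exists_inter_notMem_of_subset_biUnion (hI : IsSetIdeal I) (h0 : ∅ ∈ I) {α : Type*}
    {S : Set α} (hS : S.Finite) {f : α → Set G} {Z : Set G} (hZ : Z ∉ I)
    (hcov : Z ⊆ ⋃ a ∈ S, f a) : ∃ a ∈ S, Z ∩ f a ∉ I := by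
  by_contra! hc
  refine hZ (hI.1 _ _ (fun x hx => ?_) (hI.biUnion_mem h0 hS hc))
  obtain ⟨a, ha, hxa⟩ := Set.mem_iUnion₂.1 (hcov hx)
  exact Set.mem_biUnion ha ⟨hx, hxa⟩

end IsSetIdeal

section

variable {G : Type*} [Group G] {I : Set (Set G)}

theorem iLarge_of_mul_eq_univ (h0 : ∅ ∈ I) {F S : Set G} (hF : F.Finite)
    (hFS : F * S = Set.univ) : ILarge I S :=
  ⟨F, hF, by rwa [IdealEq, hFS, symmDiff_self]⟩

theorem combDerivI_mono (hI : IsSetIdeal I) {A B : Set G} (hBA : B ⊆ A) :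
    combDerivI I B ⊆ combDerivI I A :=
  fun _ hg hmem => hg (hI.1 _ _ (Set.inter_subset_inter (Set.smul_set_mono hBA) hBA) hmem)

theorem inv_mem_combDerivI (hTrans : IsTransInv I) {A : Set G} {g : G}
    (hg : g ∈ combDerivI I A) : g⁻¹ ∈ combDerivI I A := by
  intro hmem
  apply hg
  have h := hTrans _ hmem g
  rwa [Set.smul_set_inter, smul_inv_smul, Set.inter_comm] at h

def IThick (I : Set (Set G)) (T : Set G) : Prop :=
  ∀ H : Set G, H.Finite → (⋂ h ∈ H, h • T) ∉ I

theorem compl_mul_subset (A L F H : Set G) :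
    Set.univ \ (H * F * ((Set.univ \ A) ∩ L)) ⊆
      (⋂ h ∈ H, h • (F * (L ∩ A))) ∪ ⋃ h ∈ H, h • (Set.univ \ (F * L)) := by
  rintro x ⟨-, hx⟩
  by_contra! hW
  simp only [Set.mem_union, Set.mem_iInter₂, Set.mem_iUnion₂, not_or, not_forall,
    not_exists] at hW
  obtain ⟨⟨h, hh, hxh⟩, hxL⟩ := hW
  have hFL : h⁻¹ • x ∈ F * L := by
    simpa [Set.mem_smul_set_iff_inv_smul_mem] using hxL h hh
  obtain ⟨f, hf, l, hl, hfl⟩ := hFL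
  by_cases hlA : l ∈ A
  · exact hxh (Set.mem_smul_set_iff_inv_smul_mem.2 ⟨f, hf, l, ⟨hl, hlA⟩, hfl⟩)
  · refine hx ⟨h * f, Set.mul_mem_mul hh hf, l, ⟨⟨trivial, hlA⟩, hl⟩, ?_⟩
    simp only [smul_eq_mul] at hfl
    simp only [mul_assoc, hfl, mul_inv_cancel_left]

theorem iThick_mul_inter_of_not_iLarge (hI : IsSetIdeal I) (hTrans : IsTransInv I)
    {A L F : Set G} (hF : F.Finite) (hFL : IdealEq I (F * L) Set.univ)
    (hD : ¬ ILarge I ((Set.univ \ A) ∩ L)) : IThick I (F * (L ∩ A)) := by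
  intro H hH hW
  have hcompl : Set.univ \ (F * L) ∈ I := idealEq_univ_iff.1 hFL
  have h0 : ∅ ∈ I := hI.1 _ _ (Set.empty_subset _) hcompl
  refine hD ⟨H * F, hH.mul hF, idealEq_univ_iff.2 (hI.1 _ _ (compl_mul_subset A L F H) ?_)⟩
  exact hI.2 _ hW _ (hI.biUnion_mem h0 hH fun h _ => hTrans _ hcompl h)

theorem IThick.exists_mul_mem_combDerivI (hI : IsSetIdeal I) (hTrans : IsTransInv I)
    (h0 : ∅ ∈ I) {F B : Set G} (hF : F.Finite) (hT : IThick I (F * B)) (g : G) :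
    ∃ f ∈ F, g * f ∈ combDerivI I B := by
  -- Pigeonholing `Z ⊆ F * B` gives `f₀`, then pigeonholing `Z ⊆ (f₀ * g) • (F * B)` gives `f`.
  set H := insert 1 ((· * g) '' F)
  have hZ : (⋂ h ∈ H, h • (F * B)) ∉ I := hT H ((hF.image _).insert 1)
  have hZ_sub {h : G} (hh : h ∈ H) : (⋂ h ∈ H, h • (F * B)) ⊆ ⋃ f ∈ F, (h * f) • B := by
    intro x hx
    obtain ⟨y, ⟨f, hf, b, hb, rfl⟩, rfl⟩ := Set.biInter_subset_of_mem hh hx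
    exact Set.mem_biUnion hf ⟨b, hb, by simp [mul_assoc]⟩
  obtain ⟨f₀, hf₀, hZ₀⟩ :=
    hI.exists_inter_notMem_of_subset_biUnion h0 hF hZ (hZ_sub (Set.mem_insert 1 _))
  obtain ⟨f, hf, hZ₁⟩ := hI.exists_inter_notMem_of_subset_biUnion h0 hF hZ₀
    ((Set.inter_subset_left).trans (hZ_sub (Set.mem_insert_of_mem _ ⟨f₀, hf₀, rfl⟩)))
  refine ⟨f, hf, fun hmem => hZ₁ (hI.1 _ _ (fun x hx => ?_) (hTrans _ hmem f₀))⟩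
  rw [one_mul] at hx
  rw [Set.smul_set_inter, smul_smul, ← mul_assoc]
  exact ⟨hx.2, hx.1.2⟩

theorem IThick.mul_combDerivI_eq_univ (hI : IsSetIdeal I) (hTrans : IsTransInv I)
    (h0 : ∅ ∈ I) {F B : Set G} (hF : F.Finite) (hT : IThick I (F * B)) :
    F * combDerivI I B = Set.univ := by
  refine Set.eq_univ_of_forall fun y => ?_
  obtain ⟨f, hf, hyf⟩ := hT.exists_mul_mem_combDerivI hI hTrans h0 hF y⁻¹
  have hfy : f⁻¹ * y ∈ combDerivI I B := by
    simpa using inv_mem_combDerivI hTrans hyf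
  simpa using Set.mul_mem_mul hf hfy

end

theorem not_Ismall_implies_deltaI_large_general {G : Type*} [Group G]
    (I : Set (Set G)) (hIdeal : IsSetIdeal I) (hTrans : IsTransInv I)
    (A : Set G) (hA : ¬ ISmall I A) :
    ILarge I (combDerivI I A) := by
  simp only [ISmall, not_forall] at hA
  obtain ⟨L, ⟨F, hF, hFL⟩, hD⟩ := hA
  have h0 : ∅ ∈ I := hIdeal.1 _ _ (Set.empty_subset _) hFL
  have hthick := iThick_mul_inter_of_not_iLarge hIdeal hTrans hF hFL hD
  refine iLarge_of_mul_eq_univ h0 hF (Set.eq_univ_of_univ_subset ?_)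
  rw [← hthick.mul_combDerivI_eq_univ hIdeal hTrans h0 hF]
  exact Set.mul_subset_mul_left (combDerivI_mono hIdeal Set.inter_subset_right)

/-- If `A` is not `I`-small, then `A` is `Δ_I`-large. -/
theorem not_Ismall_implies_deltaI_large {G : Type*} [Group G] [Infinite G]
    (I : Set (Set G)) (hIdeal : IsSetIdeal I) (hTrans : IsTransInv I)
    (hProper : Set.univ ∉ I) (A : Set G) (hA : ¬ ISmall I A) :
    ILarge I (combDerivI I A) :=
  not_Ismall_implies_deltaI_large_general I hIdeal hTrans A hA
end

section
/- Let G be an infinite group, A a subset of G, and F a finite subset of G. If FA = G, then F·Δ(A) = G. In particular, every large subset of G is Δ-large. -/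
open Pointwise

/-! Since `FA = G`, the infinite set `gA` is covered by the finitely many translates `fA`, `f ∈ F`,
so it meets one of them in an infinite set; translating back by `f⁻¹` shows `f⁻¹g ∈ Δ(A)`. -/

theorem Set.Infinite.exists_infinite_inter_of_subset_biUnion {α ι : Type*} {B : Set α}
    {F : Set ι} {S : ι → Set α} (hB : B.Infinite) (hF : F.Finite) (hBS : B ⊆ ⋃ i ∈ F, S i) :
    ∃ i ∈ F, (B ∩ S i).Infinite := by
  by_contra! h
  refine hB ((hF.biUnion h).subset fun x hx => ?_)
  obtain ⟨i, hi, hxi⟩ := Set.mem_iUnion₂.1 (hBS hx)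
  exact Set.mem_biUnion hi ⟨hx, hxi⟩

section Group

variable {G : Type*} [Group G]

theorem Set.Infinite.of_finite_mul_eq_univ [Infinite G] {A F : Set G} (hF : F.Finite)
    (hFA : F * A = Set.univ) : A.Infinite :=
  fun hA => Set.infinite_univ (hFA ▸ hF.mul hA)

theorem inv_mul_mem_combDeriv {A : Set G} {f g : G} (h : (g • A ∩ f • A).Infinite) :
    f⁻¹ * g ∈ combDeriv A := by
  have htranslate : f⁻¹ • (g • A ∩ f • A) = (f⁻¹ * g) • A ∩ A := by
    rw [Set.smul_set_inter, smul_smul, smul_smul, inv_mul_cancel, one_smul]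
  show ((f⁻¹ * g) • A ∩ A).Infinite
  exact htranslate ▸ h.smul_set

end Group

/-- If `FA = G` then `F·Δ(A) = G`; in particular `A` is Δ-large. -/
theorem mul_combDeriv_eq_univ {G : Type*} [Group G] [Infinite G]
    (A F : Set G) (hF : F.Finite) (hFA : F * A = Set.univ) :
    F * combDeriv A = Set.univ ∧ IsLarge (combDeriv A) := by
  have hA : A.Infinite := .of_finite_mul_eq_univ hF hFA
  have hcover : F * combDeriv A = Set.univ := by
    refine Set.eq_univ_of_forall fun g => ?_
    obtain ⟨f, hf, hinf⟩ := (hA.smul_set (a := g)).exists_infinite_inter_of_subset_biUnion hF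
      ((Set.iUnion_smul_left_image.trans hFA).symm ▸ Set.subset_univ _)
    exact ⟨f, hf, f⁻¹ * g, inv_mul_mem_combDeriv hinf, mul_inv_cancel_left f g⟩
  exact ⟨hcover, F, hF, hcover⟩
end

section
/- Let G be an infinite group and I* a proper translation invariant ideal on G that is maximal with respect to inclusion among all proper translation invariant ideals on G. Then every subset A of G with A ∉ I* is I*-large; that is, there exist a finite subset F of G and a set J ∈ I* such that FA ∪ J = G. -/
/-!
If `A ∉ I*`, the sets `S` with `S \ FA ∈ I*` for some finite `F` form a translation invariant
ideal containing `I*` and `A`. By maximality it is not proper, i.e. `G \ FA ∈ I*` for some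
finite `F`, which is exactly the largeness of `A`.
-/

open Pointwise

section

variable {G : Type*}

def IsProperTransInvIdeal [Group G] (I : Set (Set G)) : Prop :=
  IsSetIdeal I ∧ IsTransInv I ∧ Set.univ ∉ I

lemma IsSetIdeal.insert_empty {I : Set (Set G)} (hI : IsSetIdeal I) :
    IsSetIdeal (insert ∅ I) := by
  refine ⟨?_, ?_⟩
  · rintro s t hst (rfl | ht)
    · exact Or.inl (Set.subset_empty_iff.mp hst)
    · exact Or.inr (hI.1 s t hst ht)
  · rintro s (rfl | hs) t (rfl | ht)
    · exact Or.inl (Set.empty_union _)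
    · simpa using Or.inr ht
    · simpa using Or.inr hs
    · exact Or.inr (hI.2 s hs t ht)

lemma IsTransInv.insert_empty [Group G] {I : Set (Set G)} (hI : IsTransInv I) :
    IsTransInv (insert ∅ I) := by
  rintro s (rfl | hs) g
  · exact Or.inl Set.smul_set_empty
  · exact Or.inr (hI s hs g)

lemma IsProperTransInvIdeal.insert_empty [Group G] {I : Set (Set G)}
    (hI : IsProperTransInvIdeal I) : IsProperTransInvIdeal (insert ∅ I) :=
  ⟨hI.1.insert_empty, hI.2.1.insert_empty,
    fun h => h.elim (fun h => Set.empty_ne_univ h.symm) hI.2.2⟩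

/-- The definition of an ideal allows `I = ∅`; maximality excludes it. -/
lemma IsProperTransInvIdeal.empty_mem_of_maximal [Group G] {I : Set (Set G)}
    (hI : IsProperTransInvIdeal I)
    (hMax : ∀ J, IsProperTransInvIdeal J → I ⊆ J → J = I) : ∅ ∈ I :=
  hMax _ hI.insert_empty (Set.subset_insert _ _) ▸ Set.mem_insert _ _

/-- The ideal generated by `I` and the left translates of `A`. -/
def coverIdeal [Group G] (I : Set (Set G)) (A : Set G) : Set (Set G) :=
  {S | ∃ F : Set G, F.Finite ∧ S \ (F * A) ∈ I}

section coverIdeal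

variable [Group G] {I : Set (Set G)} {A : Set G}

lemma subset_coverIdeal : I ⊆ coverIdeal I A :=
  fun S hS => ⟨∅, Set.finite_empty, by simpa using hS⟩

lemma mem_coverIdeal_self (h : ∅ ∈ I) : A ∈ coverIdeal I A :=
  ⟨1, Set.finite_one, by simpa using h⟩

lemma IsSetIdeal.coverIdeal (hI : IsSetIdeal I) : IsSetIdeal (coverIdeal I A) := by
  refine ⟨?_, ?_⟩
  · rintro S T hST ⟨F, hF, hT⟩
    exact ⟨F, hF, hI.1 _ _ (Set.sdiff_subset_sdiff_left hST) hT⟩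
  · rintro S ⟨F₁, hF₁, hS⟩ T ⟨F₂, hF₂, hT⟩
    refine ⟨F₁ ∪ F₂, hF₁.union hF₂, hI.1 _ _ ?_ (hI.2 _ hS _ hT)⟩
    rw [Set.union_mul, Set.union_sdiff_distrib]
    exact Set.union_subset_union
      (Set.sdiff_subset_sdiff_right (Set.subset_union_left))
      (Set.sdiff_subset_sdiff_right (Set.subset_union_right))

lemma IsTransInv.coverIdeal (hI : IsTransInv I) : IsTransInv (coverIdeal I A) := by
  rintro S ⟨F, hF, hS⟩ g
  refine ⟨g • F, hF.smul_set, ?_⟩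
  simpa only [Set.smul_set_sdiff, smul_mul_assoc] using hI _ hS g

end coverIdeal

lemma iLarge_of_univ_sdiff_mem [Group G] {I : Set (Set G)} {A F : Set G} (hF : F.Finite)
    (h : Set.univ \ (F * A) ∈ I) : ILarge I A := by
  refine ⟨F, hF, ?_⟩
  rwa [IdealEq, ← Set.top_eq_univ, symmDiff_top, hnot_eq_compl, Set.compl_eq_univ_sdiff]

end

theorem maximal_ideal_not_mem_implies_large_general {G : Type*} [Group G]
    (Istar : Set (Set G))
    (hIdeal : IsSetIdeal Istar) (hTrans : IsTransInv Istar)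
    (hProper : Set.univ ∉ Istar)
    (hMax : ∀ J : Set (Set G), (IsSetIdeal J ∧ IsTransInv J ∧ Set.univ ∉ J) →
      Istar ⊆ J → J = Istar)
    (A : Set G) (hA : A ∉ Istar) :
    ILarge Istar A ∧
      ∃ F : Set G, F.Finite ∧ ∃ J ∈ Istar, F * A ∪ J = Set.univ := by
  have hempty : ∅ ∈ Istar :=
    IsProperTransInvIdeal.empty_mem_of_maximal ⟨hIdeal, hTrans, hProper⟩ hMax
  obtain ⟨F, hF, hcompl⟩ : ∃ F : Set G, F.Finite ∧ Set.univ \ (F * A) ∈ Istar := by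
    by_contra h
    have hcover : coverIdeal Istar A = Istar :=
      hMax _ ⟨hIdeal.coverIdeal, hTrans.coverIdeal, h⟩ subset_coverIdeal
    exact hA (hcover ▸ mem_coverIdeal_self hempty)
  exact ⟨iLarge_of_univ_sdiff_mem hF hcompl,
    F, hF, _, hcompl, Set.union_sdiff_self.trans (Set.union_univ _)⟩

/-- For a maximal proper translation invariant ideal `I*`, every set not in
`I*` is `I*`-large: there are a finite `F` and `J ∈ I*` with `FA ∪ J = G`. -/
theorem maximal_ideal_not_mem_implies_large {G : Type*} [Group G] [Infinite G]
    (Istar : Set (Set G))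
    (hIdeal : IsSetIdeal Istar) (hTrans : IsTransInv Istar)
    (hProper : Set.univ ∉ Istar)
    (hMax : ∀ J : Set (Set G), (IsSetIdeal J ∧ IsTransInv J ∧ Set.univ ∉ J) →
      Istar ⊆ J → J = Istar)
    (A : Set G) (hA : A ∉ Istar) :
    ILarge Istar A ∧
      ∃ F : Set G, F.Finite ∧ ∃ J ∈ Istar, F * A ∪ J = Set.univ :=
  maximal_ideal_not_mem_implies_large_general Istar hIdeal hTrans hProper hMax A hA
end
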